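/- Let m ≥ 2, l ≥ 1, n_m ≥ 1. Let J ∈ ℝ^{(m−1)l×(m−1)l} be the lower block-triangular matrix whose (i, j)-th l×l block is I_l for i ≥ j and 0 for i < j, and Ĩ := (I_l, …, I_l) ∈ ℝ^{l×(m−1)l}. Let γ ∈ (0, 1], L > 0, A_m ∈ ℝ^{l×n_m}, and set μ := σ_min(A_m A_mᵀ). Let β, β⁺ > 0 satisfy 1/β² + μ/(Lβ) ≥ 1/(β⁺)² + (1 − γ)μ/(Lβ⁺). Define Q := [ β J, 0 ; −Ĩ, (1/β) I_l ], N := γ [ √β I_{(m−1)l}, 0 ; −√β Ĩ, (1/√β) I_l ], H := (1/γ) blockdiag(β J Jᵀ, (1/β) I_l), G := Qᵀ + Q − (1/γ) Nᵀ N, and H₀(s) := (1/γ) blockdiag( J Jᵀ, (1/s² + (1 − γ)μ/(L s)) I_l ) for s > 0. Let v^k = (w^k, λ^k), v^{k+1} = (w^{k+1}, λ^{k+1}), ṽ ∈ ℝ^{(m−1)l} × ℝ^l and v* = (w*, λ*) ∈ ℝ^{(m−1)l} × ℝ^l, and let g, g* ∈ ℝ^{n_m} satisfy g = A_mᵀ(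 (1/γ) λ^{k+1} + (1 − 1/γ) λ^k ) and g* = A_mᵀ λ*. Then (1/β)( ‖v^{k+1} − v*‖²_H + (1/L)‖g − g*‖² − ‖v^k − v*‖²_H + ‖v^k − ṽ‖²_G ) ≥ ‖v^{k+1} − v*‖²_{H₀(β⁺)} − ‖v^k − v*‖²_{H₀(β)}. -/

import Mathlib

open Matrix

/-- `qf D w = wᵀ D w`, the (possibly indefinite) quadratic form `‖w‖²_D`. -/
noncomputable def qf {m : Type*} [Fintype m] (D : Matrix m m ℝ) (w : m → ℝ) : ℝ :=
  w ⬝ᵥ D.mulVec w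

/-- `minEig B` is the smallest eigenvalue of `B` (for a symmetric matrix, the
infimum of its eigenvalue set), denoted `σ_min(B)` in the paper. -/
noncomputable def minEig {m : Type*} [Fintype m] (B : Matrix m m ℝ) : ℝ :=
  sInf {μ : ℝ | ∃ v : m → ℝ, v ≠ 0 ∧ B.mulVec v = μ • v}

/-!
The G-term is nonnegative: since J + Jᵀ = ĨᵀĨ + I, one computes
‖(x, y)‖²_G = (1 - γ)β(‖x‖² + ‖Ĩx - y/β‖²) + ‖y‖²/β.
The gradient term is bounded below by the Rayleigh quotient,
‖g - g*‖² ≥ μ‖p‖² with p = (1/γ)(λ^{k+1} - λ*) + (1 - 1/γ)(λ^k - λ*), and since 1/γ ≥ 1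
the square of this extrapolation dominates the combination of squares,
‖p‖² ≥ (1/γ)‖λ^{k+1} - λ*‖² + (1 - 1/γ)‖λ^k - λ*‖².
What remains is scalar and follows from the step-size condition.
-/

section QuadraticForm

variable {ι κ : Type*} [Fintype ι] [Fintype κ]

lemma dotProduct_self_nonneg (v : ι → ℝ) : 0 ≤ v ⬝ᵥ v :=
  Finset.sum_nonneg fun i _ => mul_self_nonneg (v i)

lemma mul_dotProduct_self_add_le_of_one_le {t : ℝ} (ht : 1 ≤ t) (u v : ι → ℝ) :
    t * (u ⬝ᵥ u) + (1 - t) * (v ⬝ᵥ v) ≤ (t • u + (1 - t) • v) ⬝ᵥ (t • u + (1 - t) • v) := by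
  have hdiff : (t • u + (1 - t) • v) ⬝ᵥ (t • u + (1 - t) • v)
      - (t * (u ⬝ᵥ u) + (1 - t) * (v ⬝ᵥ v)) = t * (t - 1) * ((u - v) ⬝ᵥ (u - v)) := by
    simp only [add_dotProduct, dotProduct_add, smul_dotProduct, dotProduct_smul, sub_dotProduct,
      dotProduct_sub, smul_eq_mul, dotProduct_comm v u]
    ring
  have := mul_nonneg (mul_nonneg (by linarith : 0 ≤ t) (by linarith : 0 ≤ t - 1))
    (dotProduct_self_nonneg (u - v))
  linarith

lemma qf_add (D E : Matrix ι ι ℝ) (w : ι → ℝ) : qf (D + E) w = qf D w + qf E w := by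
  simp only [qf, add_mulVec, dotProduct_add]

lemma qf_sub (D E : Matrix ι ι ℝ) (w : ι → ℝ) : qf (D - E) w = qf D w - qf E w := by
  simp only [qf, sub_mulVec, dotProduct_sub]

lemma qf_smul (c : ℝ) (D : Matrix ι ι ℝ) (w : ι → ℝ) : qf (c • D) w = c * qf D w := by
  simp only [qf, smul_mulVec, dotProduct_smul, smul_eq_mul]

lemma qf_one [DecidableEq ι] (w : ι → ℝ) : qf 1 w = w ⬝ᵥ w := by
  rw [qf, one_mulVec]

lemma qf_transpose (D : Matrix ι ι ℝ) (w : ι → ℝ) : qf Dᵀ w = qf D w := by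
  rw [qf, qf, dotProduct_mulVec, vecMul_transpose, dotProduct_comm]

lemma qf_transpose_mul_self (N : Matrix κ ι ℝ) (w : ι → ℝ) :
    qf (Nᵀ * N) w = N *ᵥ w ⬝ᵥ N *ᵥ w := by
  rw [qf, ← mulVec_mulVec, dotProduct_mulVec, vecMul_transpose]

lemma qf_fromBlocks (A : Matrix ι ι ℝ) (B : Matrix ι κ ℝ) (C : Matrix κ ι ℝ)
    (D : Matrix κ κ ℝ) (x : ι → ℝ) (y : κ → ℝ) :
    qf (fromBlocks A B C D) (Sum.elim x y)
      = x ⬝ᵥ (A *ᵥ x + B *ᵥ y) + y ⬝ᵥ (C *ᵥ x + D *ᵥ y) := by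
  rw [qf, fromBlocks_mulVec, sumElim_dotProduct_sumElim, Sum.elim_comp_inl, Sum.elim_comp_inr]

lemma qf_fromBlocks_zero_zero_smul_one [DecidableEq κ] (A : Matrix ι ι ℝ) (c : ℝ)
    (x : ι → ℝ) (y : κ → ℝ) :
    qf (fromBlocks A 0 0 (c • 1)) (Sum.elim x y) = qf A x + c * (y ⬝ᵥ y) := by
  rw [qf_fromBlocks, qf]
  simp only [zero_mulVec, add_zero, zero_add, smul_mulVec, one_mulVec, dotProduct_smul,
    smul_eq_mul]

lemma qf_transpose_mul_mul (M : Matrix κ ι ℝ) (D : Matrix κ κ ℝ) (w : ι → ℝ) :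
    qf (Mᵀ * D * M) w = qf D (M *ᵥ w) := by
  rw [qf, qf, ← mulVec_mulVec, ← mulVec_mulVec, dotProduct_mulVec, vecMul_transpose]
lemma qf_diagonal [DecidableEq ι] (d w : ι → ℝ) : qf (diagonal d) w = ∑ i, d i * w i ^ 2 := by
  simp only [qf, dotProduct, mulVec_diagonal]
  exact Finset.sum_congr rfl fun i _ => by ring

end QuadraticForm

lemma sumElim_sub_sumElim {ι κ : Type*} (a c : ι → ℝ) (b d : κ → ℝ) :
    Sum.elim a b - Sum.elim c d = Sum.elim (a - c) (b - d) := by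
  ext (i | i) <;> rfl

lemma Matrix.posSemidef_mul_transpose_self {ι κ : Type*} [Fintype ι] [Fintype κ]
    (A : Matrix κ ι ℝ) : (A * Aᵀ).PosSemidef := by
  simpa [conjTranspose_eq_transpose_of_trivial] using posSemidef_self_mul_conjTranspose A

namespace Matrix.PosSemidef

variable {n : Type*} [Fintype n] {B : Matrix n n ℝ}

lemma nonneg_of_mulVec_eq_smul (hB : B.PosSemidef) {v : n → ℝ} {μ : ℝ} (hv : v ≠ 0)
    (h : B *ᵥ v = μ • v) : 0 ≤ μ := by
  have hvBv := hB.dotProduct_mulVec_nonneg v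
  rw [star_trivial, h, dotProduct_smul, smul_eq_mul] at hvBv
  have hvv : 0 < v ⬝ᵥ v := by simpa using dotProduct_self_star_pos_iff.mpr hv
  exact nonneg_of_mul_nonneg_left hvBv hvv

lemma minEig_nonneg (hB : B.PosSemidef) : 0 ≤ minEig B :=
  Real.sInf_nonneg fun _ ⟨_, hv, h⟩ => hB.nonneg_of_mulVec_eq_smul hv h

lemma minEig_le_eigenvalues [DecidableEq n] (hB : B.PosSemidef) (i : n) :
    minEig B ≤ hB.1.eigenvalues i := by
  refine csInf_le ⟨0, fun _ ⟨_, hv, h⟩ => hB.nonneg_of_mulVec_eq_smul hv h⟩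
    ⟨hB.1.eigenvectorBasis i, fun h => ?_, hB.1.mulVec_eigenvectorBasis i⟩
  exact hB.1.eigenvectorBasis.orthonormal.ne_zero i (by ext j; exact congrFun h j)

lemma minEig_mul_dotProduct_self_le [DecidableEq n] (hB : B.PosSemidef) (p : n → ℝ) :
    minEig B * (p ⬝ᵥ p) ≤ p ⬝ᵥ B *ᵥ p := by
  set U : Matrix n n ℝ := (hB.1.eigenvectorUnitary : Matrix n n ℝ)
  have hU : Uᵀᵀ * 1 * Uᵀ = 1 := by
    simpa [star_eq_conjTranspose, conjTranspose_eq_transpose_of_trivial] using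
      Unitary.mul_star_self_of_mem hB.1.eigenvectorUnitary.2
  have hB_eq : B = Uᵀᵀ * diagonal hB.1.eigenvalues * Uᵀ := by
    simpa [RCLike.ofReal_real_eq_id, star_eq_conjTranspose,
      conjTranspose_eq_transpose_of_trivial] using hB.1.spectral_theorem
  have hnorm : p ⬝ᵥ p = ∑ i, (Uᵀ *ᵥ p) i ^ 2 := by
    rw [← qf_one, ← hU, qf_transpose_mul_mul, qf_one, dotProduct]
    simp only [sq]
  calc minEig B * (p ⬝ᵥ p) = ∑ i, minEig B * (Uᵀ *ᵥ p) i ^ 2 := by rw [hnorm, Finset.mul_sum]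
    _ ≤ ∑ i, hB.1.eigenvalues i * (Uᵀ *ᵥ p) i ^ 2 :=
      Finset.sum_le_sum fun i _ => by gcongr; exact hB.minEig_le_eigenvalues i
    _ = p ⬝ᵥ B *ᵥ p := by rw [← qf_diagonal, ← qf_transpose_mul_mul, ← hB_eq, qf]

end Matrix.PosSemidef

lemma add_transpose_eq_of_lowerBlockOnes {M l : ℕ}
    {J : Matrix (Fin M × Fin l) (Fin M × Fin l) ℝ}
    (hJ : ∀ p q, J p q = if q.1 ≤ p.1 ∧ p.2 = q.2 then 1 else 0)
    {Itil : Matrix (Fin l) (Fin M × Fin l) ℝ}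
    (hItil : ∀ a q, Itil a q = if a = q.2 then 1 else 0) :
    J + Jᵀ = Itilᵀ * Itil + 1 := by
  ext ⟨i, s⟩ ⟨j, t⟩
  have hItil2 : (Itilᵀ * Itil) (i, s) (j, t) = if s = t then 1 else 0 := by
    simp only [mul_apply, transpose_apply, hItil]
    rw [Finset.sum_eq_single s] <;> simp +contextual [eq_comm]
  simp only [Matrix.add_apply, transpose_apply, hJ, hItil2, one_apply, Prod.ext_iff]
  by_cases hst : s = t
  · subst hst
    rcases lt_trichotomy i j with h | rfl | h
    · simp [h.ne, not_le.mpr h, h.le]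
    · simp
    · simp [h.ne', not_le.mpr h, h.le]
  · simp [hst, Ne.symm hst]

lemma qf_nonneg_of_eq_transpose_add_sub {ι κ : Type*} [Fintype ι] [Fintype κ]
    [DecidableEq ι] [DecidableEq κ]
    {J : Matrix ι ι ℝ} {Itil : Matrix κ ι ℝ} (hJ : J + Jᵀ = Itilᵀ * Itil + 1)
    {β γ : ℝ} (hβ : 0 < β) (hγ0 : 0 < γ) (hγ1 : γ ≤ 1)
    {Q N G : Matrix (ι ⊕ κ) (ι ⊕ κ) ℝ}
    (hQ : Q = fromBlocks (β • J) 0 (-Itil) ((1 / β) • 1))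
    (hN : N = γ • fromBlocks (Real.sqrt β • 1) 0 (-(Real.sqrt β • Itil))
        ((1 / Real.sqrt β) • 1))
    (hG : G = Qᵀ + Q - (1 / γ) • (Nᵀ * N)) (x : ι → ℝ) (y : κ → ℝ) :
    0 ≤ qf G (Sum.elim x y) := by
  have hsβ : Real.sqrt β ^ 2 = β := Real.sq_sqrt hβ.le
  set a := Itil *ᵥ x
  set r := a - β⁻¹ • y
  have hJx : 2 * qf J x = a ⬝ᵥ a + x ⬝ᵥ x := by
    have hJx' := congrArg (qf · x) hJ
    simp only [qf_add, qf_transpose, qf_transpose_mul_self, qf_one] at hJx'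
    linarith
  have hQx : qf Q (Sum.elim x y) = β * qf J x - a ⬝ᵥ y + β⁻¹ * (y ⬝ᵥ y) := by
    rw [hQ, qf_fromBlocks, qf]
    simp only [zero_mulVec, add_zero, smul_mulVec, one_mulVec, neg_mulVec, dotProduct_smul,
      dotProduct_add, dotProduct_neg, smul_eq_mul, one_div]
    rw [dotProduct_comm y]
    ring
  have hNx : N *ᵥ Sum.elim x y = (γ * Real.sqrt β) • Sum.elim x (-r) := by
    have hsβ0 : Real.sqrt β ≠ 0 := by positivity
    ext (i | i)
    · simp [hN, fromBlocks_mulVec, smul_mulVec, mul_assoc]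
    · simp [hN, fromBlocks_mulVec, smul_mulVec, r, a, neg_mulVec]
      field_simp
      rw [hsβ]; ring
  have hNN : N *ᵥ Sum.elim x y ⬝ᵥ N *ᵥ Sum.elim x y = γ ^ 2 * β * (x ⬝ᵥ x + r ⬝ᵥ r) := by
    rw [hNx, smul_dotProduct, dotProduct_smul, sumElim_dotProduct_sumElim, neg_dotProduct,
      dotProduct_neg, neg_neg, smul_eq_mul, smul_eq_mul]
    linear_combination γ ^ 2 * (x ⬝ᵥ x + r ⬝ᵥ r) * hsβ
  have hrr : r ⬝ᵥ r = a ⬝ᵥ a - 2 * β⁻¹ * (a ⬝ᵥ y) + β⁻¹ ^ 2 * (y ⬝ᵥ y) := by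
    simp only [r, sub_dotProduct, dotProduct_sub, smul_dotProduct, dotProduct_smul, smul_eq_mul,
      dotProduct_comm y a]
    ring
  have hGx : qf G (Sum.elim x y) = (1 - γ) * β * (x ⬝ᵥ x + r ⬝ᵥ r) + β⁻¹ * (y ⬝ᵥ y) := by
    rw [hG, qf_sub, qf_add, qf_transpose, qf_smul, qf_transpose_mul_self, hQx, hNN, hrr]
    field_simp
    linear_combination β ^ 2 * hJx
  rw [hGx]
  have := dotProduct_self_nonneg x
  have := dotProduct_self_nonneg r
  have := dotProduct_self_nonneg y
  have : 0 ≤ 1 - γ := by linarith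
  positivity

lemma cc3_of_stepSize {γ L β βp μ p₁ p₂ c₁ c₂ grad q : ℝ} (hγ : 0 < γ) (hL : 0 < L)
    (hβ : 0 < β) (hc₁ : 0 ≤ c₁) (hq : 0 ≤ q)
    (hgrad : μ * ((1 / γ) * c₁ + (1 - 1 / γ) * c₂) ≤ grad)
    (hstep : 1 / β ^ 2 + μ / (L * β) ≥ 1 / βp ^ 2 + (1 - γ) * μ / (L * βp)) :
    (1 / β) * ((1 / γ) * (β * p₁ + (1 / β) * c₁) + (1 / L) * grad
        - (1 / γ) * (β * p₂ + (1 / β) * c₂) + q)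
      ≥ (1 / γ) * (p₁ + (1 / βp ^ 2 + (1 - γ) * μ / (L * βp)) * c₁)
        - (1 / γ) * (p₂ + (1 / β ^ 2 + (1 - γ) * μ / (L * β)) * c₂) := by
  have hq' : 0 ≤ (1 / β) * q := by positivity
  have hgrad' : 0 ≤ 1 / (L * β) * (grad - μ * ((1 / γ) * c₁ + (1 - 1 / γ) * c₂)) :=
    mul_nonneg (by positivity) (by linarith)
  have hstep' : 0 ≤ (1 / γ) * c₁
      * (1 / β ^ 2 + μ / (L * β) - (1 / βp ^ 2 + (1 - γ) * μ / (L * βp))) :=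
    mul_nonneg (by positivity) (by linarith)
  refine sub_nonneg.mp ((add_nonneg (add_nonneg hq' hgrad') hstep').trans_eq ?_)
  field_simp
  ring

theorem stmt18_general (m l nm : ℕ)
    (J : Matrix (Fin (m - 1) × Fin l) (Fin (m - 1) × Fin l) ℝ)
    (hJ : ∀ p q, J p q = if q.1 ≤ p.1 ∧ p.2 = q.2 then 1 else 0)
    (Itil : Matrix (Fin l) (Fin (m - 1) × Fin l) ℝ)
    (hItil : ∀ a q, Itil a q = if a = q.2 then 1 else 0)
    (γ L : ℝ) (hγ : γ ∈ Set.Ioc (0 : ℝ) 1) (hL : 0 < L)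
    (Am : Matrix (Fin l) (Fin nm) ℝ)
    (μ : ℝ) (hμ : μ = minEig (Am * Amᵀ))
    (β βp : ℝ) (hβ : 0 < β)
    (hstep : 1 / β ^ 2 + μ / (L * β) ≥ 1 / βp ^ 2 + (1 - γ) * μ / (L * βp))
    (Q N H G : Matrix ((Fin (m - 1) × Fin l) ⊕ Fin l) ((Fin (m - 1) × Fin l) ⊕ Fin l) ℝ)
    (hQ : Q = Matrix.fromBlocks (β • J) 0 (-Itil) ((1 / β) • 1))
    (hN : N = γ • Matrix.fromBlocks (Real.sqrt β • 1) 0 (-(Real.sqrt β • Itil))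
        ((1 / Real.sqrt β) • 1))
    (hH : H = (1 / γ) • Matrix.fromBlocks (β • (J * Jᵀ)) 0 0 ((1 / β) • 1))
    (hG : G = Qᵀ + Q - (1 / γ) • (Nᵀ * N))
    (H₀ : ℝ → Matrix ((Fin (m - 1) × Fin l) ⊕ Fin l) ((Fin (m - 1) × Fin l) ⊕ Fin l) ℝ)
    (hH₀ : ∀ s, H₀ s = (1 / γ) • Matrix.fromBlocks (J * Jᵀ) 0 0
        ((1 / s ^ 2 + (1 - γ) * μ / (L * s)) • 1))
    (wk wkk wt ws : Fin (m - 1) × Fin l → ℝ)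
    (lamk lamkk lamt lams : Fin l → ℝ)
    (g gs : Fin nm → ℝ)
    (hg : g = Amᵀ.mulVec ((1 / γ) • lamkk + (1 - 1 / γ) • lamk))
    (hgs : gs = Amᵀ.mulVec lams) :
    (1 / β) * (qf H (Sum.elim wkk lamkk - Sum.elim ws lams)
        + (1 / L) * ((g - gs) ⬝ᵥ (g - gs))
        - qf H (Sum.elim wk lamk - Sum.elim ws lams)
        + qf G (Sum.elim wk lamk - Sum.elim wt lamt))
      ≥ qf (H₀ βp) (Sum.elim wkk lamkk - Sum.elim ws lams)
        - qf (H₀ β) (Sum.elim wk lamk - Sum.elim ws lams) := by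
  obtain ⟨hγ0, hγ1⟩ := hγ
  have hAA := posSemidef_mul_transpose_self Am
  set d₁ := lamkk - lams
  set d₂ := lamk - lams
  set p := (1 / γ) • d₁ + (1 - 1 / γ) • d₂
  have hdiff : g - gs = Amᵀ *ᵥ p := by
    rw [hg, hgs, ← mulVec_sub]
    congr 1
    module
  have hgrad : μ * ((1 / γ) * (d₁ ⬝ᵥ d₁) + (1 - 1 / γ) * (d₂ ⬝ᵥ d₂)) ≤ (g - gs) ⬝ᵥ (g - gs) := by
    rw [hdiff, ← qf_transpose_mul_self, transpose_transpose, hμ]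
    calc _ ≤ minEig (Am * Amᵀ) * (p ⬝ᵥ p) :=
          mul_le_mul_of_nonneg_left
            (mul_dotProduct_self_add_le_of_one_le (one_le_one_div hγ0 hγ1) d₁ d₂)
            hAA.minEig_nonneg
      _ ≤ _ := hAA.minEig_mul_dotProduct_self_le p
  have hG0 := qf_nonneg_of_eq_transpose_add_sub (add_transpose_eq_of_lowerBlockOnes hJ hItil)
    hβ hγ0 hγ1 hQ hN hG (wk - wt) (lamk - lamt)
  simp only [sumElim_sub_sumElim, hH, hH₀, qf_smul, qf_fromBlocks_zero_zero_smul_one]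
  exact cc3_of_stepSize hγ0 hL hβ (dotProduct_self_nonneg d₁) hG0 hgrad hstep

/-- Theorem 3.5: the `m`-block ADMM-type method for (P3), with `f_m`
`L`-gradient Lipschitz continuous, satisfies the additional convergence
condition (CC3) with `rᵏ = 1/β` and
`H₀(s) = (1/γ)blockdiag(JJᵀ, (1/s² + (1-γ)μ/(Ls))I)`, `μ = σ_min(A_mA_mᵀ)`,
under the step-size condition `1/β² + μ/(Lβ) ≥ 1/(β⁺)² + (1-γ)μ/(Lβ⁺)`.
Here `g = ∇f_m(x̃_mᵏ) = A_mᵀ((1/γ)λ^{k+1} + (1-1/γ)λᵏ)` and `g* = A_mᵀλ*`. -/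
theorem stmt18 (m l nm : ℕ) (hm : 2 ≤ m) (hl : 1 ≤ l) (hnm : 1 ≤ nm)
    (J : Matrix (Fin (m - 1) × Fin l) (Fin (m - 1) × Fin l) ℝ)
    (hJ : ∀ p q, J p q = if q.1 ≤ p.1 ∧ p.2 = q.2 then 1 else 0)
    (Itil : Matrix (Fin l) (Fin (m - 1) × Fin l) ℝ)
    (hItil : ∀ a q, Itil a q = if a = q.2 then 1 else 0)
    (γ L : ℝ) (hγ : γ ∈ Set.Ioc (0 : ℝ) 1) (hL : 0 < L)
    (Am : Matrix (Fin l) (Fin nm) ℝ)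
    (μ : ℝ) (hμ : μ = minEig (Am * Amᵀ))
    (β βp : ℝ) (hβ : 0 < β) (hβp : 0 < βp)
    (hstep : 1 / β ^ 2 + μ / (L * β) ≥ 1 / βp ^ 2 + (1 - γ) * μ / (L * βp))
    (Q N H G : Matrix ((Fin (m - 1) × Fin l) ⊕ Fin l) ((Fin (m - 1) × Fin l) ⊕ Fin l) ℝ)
    (hQ : Q = Matrix.fromBlocks (β • J) 0 (-Itil) ((1 / β) • 1))
    (hN : N = γ • Matrix.fromBlocks (Real.sqrt β • 1) 0 (-(Real.sqrt β • Itil))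
        ((1 / Real.sqrt β) • 1))
    (hH : H = (1 / γ) • Matrix.fromBlocks (β • (J * Jᵀ)) 0 0 ((1 / β) • 1))
    (hG : G = Qᵀ + Q - (1 / γ) • (Nᵀ * N))
    (H₀ : ℝ → Matrix ((Fin (m - 1) × Fin l) ⊕ Fin l) ((Fin (m - 1) × Fin l) ⊕ Fin l) ℝ)
    (hH₀ : ∀ s, H₀ s = (1 / γ) • Matrix.fromBlocks (J * Jᵀ) 0 0
        ((1 / s ^ 2 + (1 - γ) * μ / (L * s)) • 1))
    (wk wkk wt ws : Fin (m - 1) × Fin l → ℝ)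
    (lamk lamkk lamt lams : Fin l → ℝ)
    (g gs : Fin nm → ℝ)
    (hg : g = Amᵀ.mulVec ((1 / γ) • lamkk + (1 - 1 / γ) • lamk))
    (hgs : gs = Amᵀ.mulVec lams) :
    (1 / β) * (qf H (Sum.elim wkk lamkk - Sum.elim ws lams)
        + (1 / L) * ((g - gs) ⬝ᵥ (g - gs))
        - qf H (Sum.elim wk lamk - Sum.elim ws lams)
        + qf G (Sum.elim wk lamk - Sum.elim wt lamt))
      ≥ qf (H₀ βp) (Sum.elim wkk lamkk - Sum.elim ws lams)
        - qf (H₀ β) (Sum.elim wk lamk - Sum.elim ws lams) :=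
  stmt18_general m l nm J hJ Itil hItil γ L hγ hL Am μ hμ β βp hβ hstep Q N H G hQ hN hH hG H₀ hH₀
    wk wkk wt ws lamk lamkk lamt lams g gs hg hgs
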